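/- arXiv:1805.09466 — 2 statements merged into one kernel-verified Lean document; each statement's English description precedes it below -/
import Mathlib

section
/- Let α, d, τ, β > 0, let ȳ = α·e^{-dτ}/β, and let c ≥ 0. Then the equation λ - α·e^{-dτ}·e^{-λτ} + 2βȳ + c = 0 has no purely imaginary root λ = iσ with σ ∈ ℝ. Specifically, if σ, with i σ substituted, satisfies the real-part and imaginary-part equations σ = -α e^{-dτ} sin(στ) and 2βȳ + c = α e^{-dτ} cos(στ), then σ² + (2α e^{-dτ} + c)² = α²e^{-2dτ}, which is impossible since 2βȳ = 2α e^{-dτ}. -/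
theorem stmt_1 (α d τ β c : ℝ) (hα : 0 < α) (hd : 0 < d) (hτ : 0 < τ) (hβ : 0 < β)
    (hc : 0 ≤ c) (ybar : ℝ) (hy : ybar = α * Real.exp (-d * τ) / β) (σ : ℝ)
    (h1 : σ = -α * Real.exp (-d * τ) * Real.sin (σ * τ))
    (h2 : 2 * β * ybar + c = α * Real.exp (-d * τ) * Real.cos (σ * τ)) :
    False := by
  have hE : 0 < Real.exp (-d * τ) := Real.exp_pos _
  have hby : β * ybar = α * Real.exp (-d * τ) := by
    rw [hy]; field_simp
  have hcos : Real.cos (σ * τ) ≤ 1 := Real.cos_le_one _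
  nlinarith [mul_pos hα hE]
end

section
/- Let d, d₁, μ, I*, l > 0 with μI* > d, and define h(s) = -(d + d₁ s/l²)² + (μI*)² + √(((d + d₁ s/l²)² - (μI*)²)² + 4(μI* d)²) for s ≥ 0. Then h is strictly decreasing on (0, ∞). -/
lemma sqrt_diff_lt (x y K : ℝ) (hK : 0 < K) (hxy : x < y) :
    Real.sqrt (y^2 + K) < (y - x) + Real.sqrt (x^2 + K) := by
  have hx : x < Real.sqrt (x^2 + K) := by
    have h1 : Real.sqrt (x^2) < Real.sqrt (x^2 + K) :=
      Real.sqrt_lt_sqrt (sq_nonneg x) (by linarith)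
    rw [Real.sqrt_sq_eq_abs] at h1
    exact lt_of_le_of_lt (le_abs_self x) h1
  have hsq : Real.sqrt (x^2 + K) ^ 2 = x^2 + K :=
    Real.sq_sqrt (by positivity)
  have hpos : 0 < (y - x) + Real.sqrt (x^2 + K) := by
    have := Real.sqrt_nonneg (x^2 + K); linarith
  rw [Real.sqrt_lt' hpos]
  nlinarith [hx, hxy]

theorem stmt_14 (d d₁ μ I l : ℝ) (hd : 0 < d) (hd₁ : 0 < d₁) (hμ : 0 < μ)
    (hI : 0 < I) (hl : 0 < l) (hgt : d < μ * I)
    (h : ℝ → ℝ)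
    (hh : ∀ s, h s = -(d + d₁ * s / l^2)^2 + (μ * I)^2 +
      Real.sqrt (((d + d₁ * s / l^2)^2 - (μ * I)^2)^2 + 4 * (μ * I * d)^2)) :
    StrictAntiOn h (Set.Ioi 0) := by
  intro s₁ hs₁ s₂ hs₂ hlt
  simp only [Set.mem_Ioi] at hs₁ hs₂
  rw [hh s₁, hh s₂]
  set a := d + d₁ * s₁ / l^2 with ha
  set b := d + d₁ * s₂ / l^2 with hb
  have hl2 : 0 < l^2 := by positivity
  have hab : a < b := by
    have h1 : d₁ * s₁ / l^2 < d₁ * s₂ / l^2 :=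
      (div_lt_div_iff_of_pos_right hl2).mpr (by nlinarith)
    rw [ha, hb]; linarith [h1]
  have hapos : 0 < a := by
    rw [ha]; positivity
  have hab2 : a^2 < b^2 := by nlinarith
  have key := sqrt_diff_lt (a^2 - (μ*I)^2) (b^2 - (μ*I)^2) (4 * (μ*I*d)^2)
    (by positivity) (by linarith)
  linarith [key]
end
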